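/- Let n ≥ 1, β > 0, δ ∈ (0,1), and let Q, K ∈ ℝ^{d×d} satisfy ‖QᵀK‖_op ≤ 1. Suppose X : [0,T] → (ℝ^d ∖ {0})ⁿ is a C¹ curve satisfying the Pre-LN dynamics ẋⱼ(t) = Aⱼ(Θ(t)) for all j and t, where θⱼ(t) = xⱼ(t)/‖xⱼ(t)‖ and Aⱼ(Θ) = ∑_{k=1}^n w_{jk}(Θ) θₖ with w_{jk}(Θ) = exp(β⟨Qθⱼ, Kθₖ⟩)/∑_{l=1}^n exp(β⟨Qθⱼ, Kθ_l⟩). If ⟨θᵢ(s), θⱼ(s)⟩ ≥ 1 − δ for all i, j ∈ {1,…,n} and all s ∈ [0,T], then for every k ∈ {1,…,n} the magnitude rₖ(t) = ‖xₖ(t)‖ satisfies rₖ(t) ≥ rₖ(0) + (1 − δ) t for all t ∈ [0,T]. The same conclusion holds for the Peri-LN dynamics, in which rₖ instead satisfies ṙₖ(t) = ⟨θₖ(t), Aₖ(Θ(t))⟩ / ‖Aₖ(Θ(t))‖. -/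

import Mathlib

open Filter Real
open scoped RealInnerProductSpace BigOperators

/-- Attention vector `A_j(Θ)` with parameters `Q, K`, value matrix `V = I_d`, and inverse
temperature `β`. -/
noncomputable def attnQK {d n : ℕ} (β : ℝ)
    (Q K : EuclideanSpace ℝ (Fin d) →L[ℝ] EuclideanSpace ℝ (Fin d))
    (θ : Fin n → EuclideanSpace ℝ (Fin d)) (j : Fin n) : EuclideanSpace ℝ (Fin d) :=
  (∑ l, Real.exp (β * ⟪Q (θ j), K (θ l)⟫))⁻¹ •
    ∑ k, Real.exp (β * ⟪Q (θ j), K (θ k)⟫) • θ k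

/-- Direction of a nonzero vector: `x / ‖x‖`. -/
noncomputable def unitDir {d : ℕ} (x : EuclideanSpace ℝ (Fin d)) : EuclideanSpace ℝ (Fin d) :=
  ‖x‖⁻¹ • x

/-!
The radial speed of a token is `ṙₖ = ⟪θₖ, ẋₖ⟫`. The attention vector `Aₖ(Θ)` is a convex
combination of the directions `θₗ`, so it lies in the convex half-space `{v | 1 - δ ≤ ⟪θₖ, v⟫}`
and in the closed unit ball. Hence `ṙₖ ≥ 1 - δ` for Pre-LN, and for Peri-LN as well, since
dividing the nonnegative number `⟪θₖ, Aₖ⟫` by `‖Aₖ‖ ≤ 1` can only increase it. The mean value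
theorem then integrates the bound on the speed.
-/

open Set

section InnerProductSpace

variable {E : Type*} [NormedAddCommGroup E] [InnerProductSpace ℝ E]

theorem HasDerivAt.norm {f : ℝ → E} {f' : E} {t : ℝ} (hf : HasDerivAt f f' t) (hne : f t ≠ 0) :
    HasDerivAt (fun s => ‖f s‖) ⟪‖f t‖⁻¹ • f t, f'⟫ t := by
  have hsq : ‖f t‖ ^ 2 ≠ 0 := pow_ne_zero 2 (norm_ne_zero_iff.mpr hne)
  convert hf.norm_sq.sqrt hsq using 1
  · simp only [Real.sqrt_sq (norm_nonneg _)]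
  · rw [Real.sqrt_sq (norm_nonneg _), real_inner_smul_left]
    field_simp

theorem norm_add_mul_le_norm_of_le_inner {f f' : ℝ → E} {T c : ℝ}
    (hf : ∀ t ∈ Icc 0 T, HasDerivAt f (f' t) t) (hne : ∀ t ∈ Icc 0 T, f t ≠ 0)
    (hc : ∀ t ∈ Icc 0 T, c ≤ ⟪‖f t‖⁻¹ • f t, f' t⟫) :
    ∀ t ∈ Icc 0 T, ‖f 0‖ + c * t ≤ ‖f t‖ := by
  have hr : ∀ t ∈ Icc 0 T, HasDerivAt (fun s => ‖f s‖) ⟪‖f t‖⁻¹ • f t, f' t⟫ t :=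
    fun t ht => (hf t ht).norm (hne t ht)
  intro t ht
  have hgrowth := (convex_Icc 0 T).mul_sub_le_image_sub_of_le_deriv
    (fun s hs => (hr s hs).continuousAt.continuousWithinAt)
    (fun s hs => (hr s (interior_subset hs)).differentiableAt.differentiableWithinAt)
    (fun s hs => (hr s (interior_subset hs)).deriv ▸ hc s (interior_subset hs))
    0 ⟨le_rfl, ht.1.trans ht.2⟩ t ht ht.1
  linarith

theorem le_inner_inv_norm_smul {u v : E} {c : ℝ} (hc : 0 ≤ c) (huv : c ≤ ⟪u, v⟫) (hv : ‖v‖ ≤ 1) :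
    c ≤ ⟪u, ‖v‖⁻¹ • v⟫ := by
  rcases eq_or_ne v 0 with rfl | hv0
  · simpa using huv
  have hinv : 1 ≤ ‖v‖⁻¹ := (one_le_inv₀ (norm_pos_iff.mpr hv0)).mpr hv
  rw [real_inner_smul_right]
  exact huv.trans (le_mul_of_one_le_left (hc.trans huv) hinv)

end InnerProductSpace

theorem norm_unitDir_le_one {d : ℕ} (x : EuclideanSpace ℝ (Fin d)) : ‖unitDir x‖ ≤ 1 := by
  rcases eq_or_ne x 0 with rfl | hx
  · simp [unitDir]
  · rw [unitDir, norm_smul, norm_inv, norm_norm, inv_mul_cancel₀ (norm_ne_zero_iff.mpr hx)]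

section Attention

variable {d n : ℕ} (β : ℝ) (Q K : EuclideanSpace ℝ (Fin d) →L[ℝ] EuclideanSpace ℝ (Fin d))
  (θ : Fin n → EuclideanSpace ℝ (Fin d)) (j : Fin n)

theorem attnQK_eq_centerMass :
    attnQK β Q K θ j = Finset.univ.centerMass (fun k => Real.exp (β * ⟪Q (θ j), K (θ k)⟫)) θ :=
  rfl

theorem attnQK_mem_of_convex {s : Set (EuclideanSpace ℝ (Fin d))} (hs : Convex ℝ s)
    (hθ : ∀ k, θ k ∈ s) : attnQK β Q K θ j ∈ s := by
  rw [attnQK_eq_centerMass]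
  exact hs.centerMass_mem (fun _ _ => (Real.exp_pos _).le)
    (Finset.sum_pos (fun _ _ => Real.exp_pos _) ⟨j, Finset.mem_univ j⟩) (fun k _ => hθ k)

theorem norm_attnQK_le_one (hθ : ∀ k, ‖θ k‖ ≤ 1) : ‖attnQK β Q K θ j‖ ≤ 1 :=
  mem_closedBall_zero_iff.mp <|
    attnQK_mem_of_convex β Q K θ j (convex_closedBall 0 1) fun k =>
      mem_closedBall_zero_iff.mpr (hθ k)

theorem le_inner_attnQK {c : ℝ} (hθ : ∀ k, c ≤ ⟪θ j, θ k⟫) : c ≤ ⟪θ j, attnQK β Q K θ j⟫ :=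
  attnQK_mem_of_convex β Q K θ j (s := {v | c ≤ ⟪θ j, v⟫})
    (convex_halfSpace_ge (innerₛₗ ℝ (θ j)).isLinear c) hθ

end Attention

theorem radial_growth_in_cone_general (d n : ℕ) (β : ℝ)
    (δ : ℝ) (hδ : δ ∈ Set.Ioo (0 : ℝ) 1)
    (Q K : EuclideanSpace ℝ (Fin d) →L[ℝ] EuclideanSpace ℝ (Fin d))
    (T : ℝ) :
    -- Pre-LN: `ẋⱼ = Aⱼ(Θ)`
    ((∀ x : ℝ → Fin n → EuclideanSpace ℝ (Fin d),
      (∀ t ∈ Set.Icc 0 T, ∀ j, x t j ≠ 0) →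
      (∀ t ∈ Set.Icc 0 T, ∀ j, HasDerivAt (fun s => x s j)
        (attnQK β Q K (fun k => unitDir (x t k)) j) t) →
      (∀ s ∈ Set.Icc 0 T, ∀ i j : Fin n,
        1 - δ ≤ ⟪unitDir (x s i), unitDir (x s j)⟫) →
      ∀ k : Fin n, ∀ t ∈ Set.Icc 0 T, ‖x 0 k‖ + (1 - δ) * t ≤ ‖x t k‖)) ∧
    -- Peri-LN: `ẋⱼ = Aⱼ(Θ)/‖Aⱼ(Θ)‖`, so that `ṙⱼ = ⟨θⱼ, Aⱼ(Θ)⟩/‖Aⱼ(Θ)‖`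
    ((∀ x : ℝ → Fin n → EuclideanSpace ℝ (Fin d),
      (∀ t ∈ Set.Icc 0 T, ∀ j, x t j ≠ 0) →
      (∀ t ∈ Set.Icc 0 T, ∀ j, HasDerivAt (fun s => x s j)
        (‖attnQK β Q K (fun k => unitDir (x t k)) j‖⁻¹ •
          attnQK β Q K (fun k => unitDir (x t k)) j) t) →
      (∀ s ∈ Set.Icc 0 T, ∀ i j : Fin n,
        1 - δ ≤ ⟪unitDir (x s i), unitDir (x s j)⟫) →
      ∀ k : Fin n, ∀ t ∈ Set.Icc 0 T, ‖x 0 k‖ + (1 - δ) * t ≤ ‖x t k‖)) := by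
  have hδ' : 0 ≤ 1 - δ := by linarith [hδ.2]
  constructor
  · intro x hne hderiv hcone k
    exact norm_add_mul_le_norm_of_le_inner (fun t ht => hderiv t ht k) (fun t ht => hne t ht k)
      fun t ht => le_inner_attnQK β Q K _ k (hcone t ht k)
  · intro x hne hderiv hcone k
    exact norm_add_mul_le_norm_of_le_inner (fun t ht => hderiv t ht k) (fun t ht => hne t ht k)
      fun t ht => le_inner_inv_norm_smul hδ' (le_inner_attnQK β Q K _ k (hcone t ht k))
        (norm_attnQK_le_one β Q K _ k fun _ => norm_unitDir_le_one _)

/-- radial growth in a local cone for Pre-LN and Peri-LN. -/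
theorem radial_growth_in_cone (d n : ℕ) (hn : 1 ≤ n) (β : ℝ) (hβ : 0 < β)
    (δ : ℝ) (hδ : δ ∈ Set.Ioo (0 : ℝ) 1)
    (Q K : EuclideanSpace ℝ (Fin d) →L[ℝ] EuclideanSpace ℝ (Fin d))
    (hQK : ‖(ContinuousLinearMap.adjoint Q).comp K‖ ≤ 1)
    (T : ℝ) (hT : 0 ≤ T) :
    -- Pre-LN: `ẋⱼ = Aⱼ(Θ)`
    ((∀ x : ℝ → Fin n → EuclideanSpace ℝ (Fin d),
      (∀ t ∈ Set.Icc 0 T, ∀ j, x t j ≠ 0) →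
      (∀ t ∈ Set.Icc 0 T, ∀ j, HasDerivAt (fun s => x s j)
        (attnQK β Q K (fun k => unitDir (x t k)) j) t) →
      (∀ s ∈ Set.Icc 0 T, ∀ i j : Fin n,
        1 - δ ≤ ⟪unitDir (x s i), unitDir (x s j)⟫) →
      ∀ k : Fin n, ∀ t ∈ Set.Icc 0 T, ‖x 0 k‖ + (1 - δ) * t ≤ ‖x t k‖)) ∧
    -- Peri-LN: `ẋⱼ = Aⱼ(Θ)/‖Aⱼ(Θ)‖`, so that `ṙⱼ = ⟨θⱼ, Aⱼ(Θ)⟩/‖Aⱼ(Θ)‖`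
    ((∀ x : ℝ → Fin n → EuclideanSpace ℝ (Fin d),
      (∀ t ∈ Set.Icc 0 T, ∀ j, x t j ≠ 0) →
      (∀ t ∈ Set.Icc 0 T, ∀ j, HasDerivAt (fun s => x s j)
        (‖attnQK β Q K (fun k => unitDir (x t k)) j‖⁻¹ •
          attnQK β Q K (fun k => unitDir (x t k)) j) t) →
      (∀ s ∈ Set.Icc 0 T, ∀ i j : Fin n,
        1 - δ ≤ ⟪unitDir (x s i), unitDir (x s j)⟫) →
      ∀ k : Fin n, ∀ t ∈ Set.Icc 0 T, ‖x 0 k‖ + (1 - δ) * t ≤ ‖x t k‖)) :=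
  radial_growth_in_cone_general d n β δ hδ Q K T
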